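/- arXiv:1405.0533 — 4 statements merged into one kernel-verified Lean document; each statement's English description precedes it below -/
import Mathlib

section
/- Let G be a cubic graph with at least 10 vertices that has a breaker, i.e., a cycle C of length at most 5 that meets (shares a vertex with) every cycle of length at most 5 in G. Then G has at least 14 vertices. -/
/-!
Let `S` be the vertex set of the breaker and `H = G - S`. Every short cycle meets `S`, so `H` has
girth at least 6. Each vertex of `S` has two neighbours on the cycle, hence at most one outside
it, so at most `|S| ≤ 5` edges leave `S`: the degrees of `H`, all at most 3, have total deficiency
`∑ (3 - deg) ≤ 5`. A cubic graph has even order, so if `|G| ≤ 12` then `5 ≤ |H| ≤ 9`, and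
Moore-type counting rules this out. Write `f x` for the sum of the degrees of the neighbours of
`x`. In girth at least 6 the paths of length at most 2 leaving an edge `uv` end at distinct
vertices, so `2 + f u + f v ≤ |H| + deg u + deg v`; around a single vertex, `1 + f v ≤ |H|`.
Summing the first over edges, the second weighted by `3 - deg v` over vertices, and
`(3 - deg u) (3 - deg v) ≥ 0` over edges gives linear inequalities between `∑ deg`, `∑ deg²` and
`∑ deg · f` that force a deficiency of at least 6 whenever `4 ≤ |H| ≤ 9`.
-/

open Finset

namespace SimpleGraph

variable {V : Type*} {G : SimpleGraph V}

section ShortCycles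

variable {a b c d e : V}

lemma egirth_le_three (hab : G.Adj a b) (hbc : G.Adj b c) (hca : G.Adj c a) : G.egirth ≤ 3 := by
  have hc : (Walk.cons hab (.cons hbc (.cons hca .nil))).IsCycle := by
    simp [Walk.cons_isCycle_iff, hab.ne, hab.ne.symm, hbc.ne, hca.ne, hca.ne.symm]
  simpa using egirth_le_length hc

lemma egirth_le_four (hab : G.Adj a b) (hbc : G.Adj b c) (hcd : G.Adj c d) (hda : G.Adj d a)
    (hac : a ≠ c) (hbd : b ≠ d) : G.egirth ≤ 4 := by
  have hc : (Walk.cons hab (.cons hbc (.cons hcd (.cons hda .nil)))).IsCycle := by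
    simp [Walk.cons_isCycle_iff, hab.ne, hab.ne.symm, hbc.ne, hcd.ne, hda.ne, hda.ne.symm, hac,
      hac.symm, hbd]
  simpa using egirth_le_length hc

lemma egirth_le_five (hab : G.Adj a b) (hbc : G.Adj b c) (hcd : G.Adj c d) (hde : G.Adj d e)
    (hea : G.Adj e a) (hac : a ≠ c) (had : a ≠ d) (hbd : b ≠ d) (hbe : b ≠ e) (hce : c ≠ e) :
    G.egirth ≤ 5 := by
  have hc : (Walk.cons hab (.cons hbc (.cons hcd (.cons hde (.cons hea .nil))))).IsCycle := by
    simp [Walk.cons_isCycle_iff, hab.ne, hab.ne.symm, hbc.ne, hcd.ne, hde.ne, hea.ne,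
      hea.ne.symm, hac, hac.symm, had, had.symm, hbd, hbe, hce]
  simpa using egirth_le_length hc

lemma le_egirth_induce_compl {s : Set V} {n : ℕ}
    (hs : ∀ v (c : G.Walk v v), c.IsCycle → c.length < n → ∃ x ∈ c.support, x ∈ s) :
    n ≤ (G.induce sᶜ).egirth := by
  rw [le_egirth]
  intro a w hw
  by_contra! hlt
  let ι := Embedding.induce (G := G) sᶜ
  have hmap := (Walk.isCycle_map_iff_of_injective (f := ι.toHom) ι.injective).2 hw
  obtain ⟨x, hx, hxs⟩ := hs _ _ hmap (by rwa [Walk.length_map, ← Nat.cast_lt (α := ℕ∞)])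
  obtain ⟨y, -, rfl⟩ := List.mem_map.1 (Walk.support_map _ w ▸ hx)
  exact y.2 hxs

end ShortCycles

lemma Walk.IsCycle.card_support_toFinset [DecidableEq V] {u : V} {c : G.Walk u u}
    (hc : c.IsCycle) : #c.support.toFinset = c.length := by
  rw [← c.cons_tail_support, List.toFinset_cons,
    insert_eq_of_mem (List.mem_toFinset.2 (c.end_mem_tail_support hc.not_nil)),
    List.toFinset_card_of_nodup hc.support_nodup, List.length_tail, length_support]
  rfl

variable [Fintype V] [DecidableRel G.Adj]

lemma sum_neighborFinset_comm {M : Type*} [AddCommMonoid M] (g : V → V → M) :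
    ∑ v, ∑ u ∈ G.neighborFinset v, g v u = ∑ v, ∑ u ∈ G.neighborFinset v, g u v :=
  sum_comm' (by simp [adj_comm])

lemma sum_sum_neighborFinset {M : Type*} [AddCommMonoid M] (g : V → M) :
    ∑ v, ∑ u ∈ G.neighborFinset v, g u = ∑ v, G.degree v • g v := by
  rw [sum_neighborFinset_comm (fun _ u => g u)]
  simp

variable (G) in
def neighborDegreeSum (v : V) : ℕ := ∑ u ∈ G.neighborFinset v, G.degree u

lemma sum_neighborDegreeSum : ∑ v, G.neighborDegreeSum v = ∑ v, G.degree v ^ 2 := by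
  simp [neighborDegreeSum, sum_sum_neighborFinset, sq]

lemma six_mul_sum_sq_le (hΔ : ∀ v, G.degree v ≤ 3) :
    6 * ∑ v, G.degree v ^ 2 ≤ ∑ v, G.degree v * G.neighborDegreeSum v + 9 * ∑ v, G.degree v := by
  have key : ∑ v, ∑ u ∈ G.neighborFinset v, (3 * G.degree v + 3 * G.degree u) ≤
      ∑ v, ∑ u ∈ G.neighborFinset v, (G.degree v * G.degree u + 9) :=
    sum_le_sum fun v _ => sum_le_sum fun u _ => by nlinarith [hΔ v, hΔ u]
  simp only [sum_add_distrib, sum_const, card_neighborFinset_eq_degree, sum_sum_neighborFinset,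
    smul_eq_mul, ← sum_mul, mul_left_comm _ 3, ← mul_sum] at key
  simp only [sq, neighborDegreeSum]
  linarith

variable [DecidableEq V]

variable (G) in
def branch (y x : V) : Finset V := insert x ((G.neighborFinset x).erase y)

variable (G) in
def ball₂ (x : V) (A : Finset V) : Finset V := insert x (A.biUnion (G.branch x))

lemma mem_branch {y x w : V} : w ∈ G.branch y x ↔ w = x ∨ w ≠ y ∧ G.Adj x w := by
  simp [branch]

lemma mem_ball₂_erase {x y w : V} :
    w ∈ G.ball₂ x ((G.neighborFinset x).erase y) ↔
      w = x ∨ ∃ z, z ≠ y ∧ G.Adj x z ∧ (w = z ∨ w ≠ x ∧ G.Adj z w) := by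
  simp [ball₂, mem_branch, and_assoc]

lemma card_branch {y x : V} (hyx : G.Adj y x) : #(G.branch y x) = G.degree x := by
  have hx : x ∉ (G.neighborFinset x).erase y := by simp
  rw [branch, card_insert_of_notMem hx, card_erase_of_mem (by simpa using hyx.symm),
    card_neighborFinset_eq_degree,
    Nat.sub_add_cancel ((G.degree_pos_iff_exists_adj x).2 ⟨y, hyx.symm⟩)]

lemma card_ball₂ (h5 : 5 ≤ G.egirth) {x : V} {A : Finset V} (hA : A ⊆ G.neighborFinset x) :
    #(G.ball₂ x A) = 1 + ∑ z ∈ A, G.degree z := by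
  have hadj : ∀ z ∈ A, G.Adj x z := fun z hz => by simpa using hA hz
  have hx : x ∉ A.biUnion (G.branch x) := by
    simp only [mem_biUnion, mem_branch, not_exists, not_and]
    rintro z hz (rfl | ⟨hne, -⟩)
    · exact (hadj _ hz).ne rfl
    · exact hne rfl
  have hdisj : ∀ z₁ ∈ A, ∀ z₂ ∈ A, z₁ ≠ z₂ → Disjoint (G.branch x z₁) (G.branch x z₂) := by
    intro z₁ h₁ z₂ h₂ hne
    rw [Finset.disjoint_left]
    simp only [mem_branch]
    rintro w (rfl | ⟨hw, hzw⟩) (rfl | ⟨hw', hzw'⟩)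
    · exact hne rfl
    · exact absurd (h5.trans (egirth_le_three (hadj _ h₂) hzw' (hadj _ h₁).symm)) (by decide)
    · exact absurd (h5.trans (egirth_le_three (hadj _ h₁) hzw (hadj _ h₂).symm)) (by decide)
    · exact absurd (h5.trans (egirth_le_four (hadj _ h₁) hzw hzw'.symm (hadj _ h₂).symm
        hw.symm hne)) (by decide)
  rw [ball₂, card_insert_of_notMem hx, card_biUnion hdisj, add_comm,
    sum_congr rfl fun z hz => card_branch (hadj z hz)]

lemma disjoint_ball₂ (h6 : 6 ≤ G.egirth) {u v : V} (huv : G.Adj u v) :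
    Disjoint (G.ball₂ u ((G.neighborFinset u).erase v))
      (G.ball₂ v ((G.neighborFinset v).erase u)) := by
  have no3 {a b c : V} (hab : G.Adj a b) (hbc : G.Adj b c) (hca : G.Adj c a) : False :=
    absurd (h6.trans (egirth_le_three hab hbc hca)) (by decide)
  have no4 {a b c d : V} (hab : G.Adj a b) (hbc : G.Adj b c) (hcd : G.Adj c d) (hda : G.Adj d a)
      (hac : a ≠ c) (hbd : b ≠ d) : False :=
    absurd (h6.trans (egirth_le_four hab hbc hcd hda hac hbd)) (by decide)
  -- a common vertex would close a cycle of length 3, 4 or 5 through the edge `uv`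
  rw [Finset.disjoint_left]
  simp only [mem_ball₂_erase]
  rintro w (hwu | ⟨a, hav, hua, hwa | ⟨hwu, haw⟩⟩) (hwv | ⟨b, hbu, hvb, hwb | ⟨hwv, hbw⟩⟩)
  · exact huv.ne (hwu.symm.trans hwv)
  · exact hbu (hwb.symm.trans hwu)
  · subst hwu
    exact no3 huv hvb hbw
  · exact hav (hwa.symm.trans hwv)
  · subst hwa hwb
    exact no3 hua hvb.symm huv.symm
  · subst hwa
    exact no4 hua hbw.symm hvb.symm huv.symm hbu.symm hav
  · subst hwv
    exact no3 hua haw huv.symm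
  · subst hwb
    exact no4 hua haw hvb.symm huv.symm hbu.symm hav
  · by_cases hab : a = b
    · subst hab
      exact no3 hua hvb.symm huv.symm
    · exact absurd (h6.trans (egirth_le_five hua haw hbw.symm hvb.symm huv.symm hwu.symm
        hbu.symm hab hav hwv)) (by decide)

lemma one_add_neighborDegreeSum_le (h5 : 5 ≤ G.egirth) (v : V) :
    1 + G.neighborDegreeSum v ≤ Fintype.card V :=
  card_ball₂ h5 subset_rfl ▸ card_le_univ _

lemma two_add_neighborDegreeSum_add_le (h6 : 6 ≤ G.egirth) {u v : V} (huv : G.Adj u v) :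
    2 + G.neighborDegreeSum u + G.neighborDegreeSum v ≤
      Fintype.card V + G.degree u + G.degree v := by
  have h5 : (5 : ℕ∞) ≤ G.egirth := le_trans (by decide) h6
  have hcard := card_le_univ (G.ball₂ u ((G.neighborFinset u).erase v) ∪
    G.ball₂ v ((G.neighborFinset v).erase u))
  rw [card_union_of_disjoint (disjoint_ball₂ h6 huv), card_ball₂ h5 (erase_subset _ _),
    card_ball₂ h5 (erase_subset _ _)] at hcard
  have hu := sum_erase_add _ (fun x => G.degree x) ((G.mem_neighborFinset u v).2 huv)
  have hv := sum_erase_add _ (fun x => G.degree x) ((G.mem_neighborFinset v u).2 huv.symm)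
  rw [neighborDegreeSum, neighborDegreeSum, ← hu, ← hv]
  omega

lemma sum_degree_mul_neighborDegreeSum_le (h6 : 6 ≤ G.egirth) :
    2 * ∑ v, G.degree v + 2 * ∑ v, G.degree v * G.neighborDegreeSum v ≤
      Fintype.card V * ∑ v, G.degree v + 2 * ∑ v, G.degree v ^ 2 := by
  have key : ∑ v, ∑ u ∈ G.neighborFinset v,
      (2 + G.neighborDegreeSum u + G.neighborDegreeSum v) ≤
        ∑ v, ∑ u ∈ G.neighborFinset v, (Fintype.card V + G.degree u + G.degree v) :=
    sum_le_sum fun v _ => sum_le_sum fun u hu =>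
      two_add_neighborDegreeSum_add_le h6 ((G.mem_neighborFinset v u).1 hu).symm
  simp only [sum_add_distrib, sum_const, card_neighborFinset_eq_degree, sum_sum_neighborFinset,
    smul_eq_mul, ← sum_mul] at key
  simp only [sq]
  linarith

lemma three_mul_sum_sq_add_le (h5 : 5 ≤ G.egirth) (hΔ : ∀ v, G.degree v ≤ 3) :
    3 * ∑ v, G.degree v ^ 2 + Fintype.card V * ∑ v, G.degree v + 3 * Fintype.card V ≤
      3 * Fintype.card V ^ 2 + ∑ v, G.degree v + ∑ v, G.degree v * G.neighborDegreeSum v := by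
  -- the sum over `v` of `(3 - deg v) * (|V| - 1 - neighborDegreeSum v) ≥ 0`
  have key : ∑ v : V, (3 + 3 * G.neighborDegreeSum v + G.degree v * Fintype.card V) ≤
      ∑ v : V, (3 * Fintype.card V + G.degree v + G.degree v * G.neighborDegreeSum v) :=
    sum_le_sum fun v _ => by nlinarith [hΔ v, one_add_neighborDegreeSum_le h5 v]
  simp only [sum_add_distrib, sum_const, card_univ, smul_eq_mul, ← sum_mul, ← mul_sum,
    sum_neighborDegreeSum] at key
  nlinarith [key]

lemma sum_degree_add_six_le (h6 : 6 ≤ G.egirth) (hΔ : ∀ v, G.degree v ≤ 3)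
    (hp₄ : 4 ≤ Fintype.card V) (hp₉ : Fintype.card V ≤ 9) :
    ∑ v, G.degree v + 6 ≤ 3 * Fintype.card V := by
  have hE := sum_degree_mul_neighborDegreeSum_le h6
  have hT := six_mul_sum_sq_le hΔ
  have hV := three_mul_sum_sq_add_le (le_trans (by decide) h6) hΔ
  have hsq (v : V) : 5 * G.degree v ≤ G.degree v ^ 2 + 6 ∧ 4 * G.degree v ≤ G.degree v ^ 2 + 4 := by
    have := hΔ v
    interval_cases G.degree v <;> omega
  have hQ₁ : 5 * ∑ v, G.degree v ≤ ∑ v, G.degree v ^ 2 + 6 * Fintype.card V := by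
    simpa [sum_add_distrib, mul_sum, mul_comm] using sum_le_sum fun v (_ : v ∈ univ) => (hsq v).1
  have hQ₂ : 4 * ∑ v, G.degree v ≤ ∑ v, G.degree v ^ 2 + 4 * Fintype.card V := by
    simpa [sum_add_distrib, mul_sum, mul_comm] using sum_le_sum fun v (_ : v ∈ univ) => (hsq v).2
  generalize ∑ v, G.degree v = S₁ at *
  generalize ∑ v, G.degree v ^ 2 = S₂ at *
  generalize ∑ v, G.degree v * G.neighborDegreeSum v = T at *
  generalize Fintype.card V = p at *
  interval_cases p <;> omega

lemma Walk.IsCycle.two_le_card_neighborFinset_inter {u v : V} {c : G.Walk u u}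
    (hc : c.IsCycle) (hv : v ∈ c.support) : 2 ≤ #(G.neighborFinset v ∩ c.support.toFinset) := by
  have hsub : c.toSubgraph.neighborSet v ⊆ ↑(G.neighborFinset v ∩ c.support.toFinset) :=
    fun w hw => by simpa using ⟨hw.adj_sub, (c.mem_verts_toSubgraph).1 hw.snd_mem⟩
  rw [← hc.ncard_neighborSet_toSubgraph_eq_two hv, ← Set.ncard_coe_finset]
  exact Set.ncard_le_ncard hsub

lemma degree_induce_coe (T : Finset V) (v : (T : Set V)) :
    (G.induce T).degree v = #(G.neighborFinset v ∩ T) := by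
  have := map_neighborFinset_induce (G := G) (s := (T : Set V)) v
  rw [toFinset_coe] at this
  rw [← card_neighborFinset_eq_degree, ← this, card_map]
  congr
  exact Subsingleton.elim _ _

lemma degree_induce_coe_le (T : Finset V) (v : (T : Set V)) :
    (G.induce T).degree v ≤ G.degree v := by
  rw [degree_induce_coe, ← card_neighborFinset_eq_degree]
  exact card_le_card inter_subset_left

lemma sum_degree_induce_coe (T : Finset V) :
    ∑ v : (T : Set V), (G.induce T).degree v = ∑ v ∈ T, #(G.neighborFinset v ∩ T) := by
  simp only [degree_induce_coe]
  exact sum_coe_sort T fun v => #(G.neighborFinset v ∩ T)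

lemma sum_card_neighborFinset_inter_comm (A B : Finset V) :
    ∑ v ∈ A, #(G.neighborFinset v ∩ B) = ∑ v ∈ B, #(G.neighborFinset v ∩ A) := by
  simp_rw [card_eq_sum_ones]
  exact sum_comm' fun x y => by simp only [mem_inter, mem_neighborFinset, adj_comm _ x]; tauto

lemma IsRegularOfDegree.mul_card_compl_le {d : ℕ} (hG : G.IsRegularOfDegree d) {S : Finset V}
    (hS : ∀ v ∈ S, d ≤ #(G.neighborFinset v ∩ S) + 1) :
    d * #Sᶜ ≤ ∑ v ∈ Sᶜ, #(G.neighborFinset v ∩ Sᶜ) + #S := by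
  have hsplit (v : V) : #(G.neighborFinset v ∩ S) + #(G.neighborFinset v ∩ Sᶜ) = d := by
    rw [← sdiff_eq_inter_compl, card_inter_add_card_sdiff, card_neighborFinset_eq_degree,
      hG.degree_eq]
  have hout : ∑ v ∈ S, #(G.neighborFinset v ∩ Sᶜ) ≤ #S := by
    simpa using sum_le_sum fun v hv => (by have := hsplit v; have := hS v hv; omega :
      #(G.neighborFinset v ∩ Sᶜ) ≤ 1)
  calc d * #Sᶜ = ∑ v ∈ Sᶜ, (#(G.neighborFinset v ∩ Sᶜ) + #(G.neighborFinset v ∩ S)) := by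
        simp [hsplit, add_comm, mul_comm]
    _ = ∑ v ∈ Sᶜ, #(G.neighborFinset v ∩ Sᶜ) + ∑ v ∈ S, #(G.neighborFinset v ∩ Sᶜ) := by
        rw [sum_add_distrib, sum_card_neighborFinset_inter_comm Sᶜ S]
    _ ≤ _ := by omega

end SimpleGraph

open SimpleGraph

/-- A cubic graph with at least 10 vertices having a breaker (a cycle of
length at most 5 meeting every cycle of length at most 5) has at least 14 vertices. -/
theorem cubic_with_breaker_has_14_vertices {V : Type*} [Fintype V] (G : SimpleGraph V)
    [DecidableRel G.Adj] (hcubic : G.IsRegularOfDegree 3)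
    (h10 : 10 ≤ Fintype.card V)
    (hbreaker : ∃ (u : V) (c : G.Walk u u), c.IsCycle ∧ c.length ≤ 5 ∧
      ∀ (v : V) (c' : G.Walk v v), c'.IsCycle → c'.length ≤ 5 →
        ∃ x, x ∈ c.support ∧ x ∈ c'.support) :
    14 ≤ Fintype.card V := by
  classical
  obtain ⟨u, c, hc, hlen, hmeet⟩ := hbreaker
  set S := c.support.toFinset
  have hgirth : 6 ≤ (G.induce (S : Set V)ᶜ).egirth := by
    refine le_egirth_induce_compl (n := 6) fun v c' hc' hlen' => ?_
    obtain ⟨x, hx, hx'⟩ := hmeet v c' hc' (by omega)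
    exact ⟨x, hx', by simpa [S] using hx⟩
  rw [← coe_compl] at hgirth
  have hΔ (v) : (G.induce (Sᶜ : Finset V)).degree v ≤ 3 :=
    (degree_induce_coe_le _ v).trans (hcubic.degree_eq v).le
  have hdeficiency := hcubic.mul_card_compl_le (S := S) fun v hv => by
    have : 2 ≤ #(G.neighborFinset v ∩ S) :=
      hc.two_le_card_neighborFinset_inter (List.mem_toFinset.1 hv)
    omega
  rw [← sum_degree_induce_coe] at hdeficiency
  have hcard : Fintype.card ((Sᶜ : Finset V) : Set V) = #Sᶜ := Fintype.card_coe Sᶜ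
  have hS : #S = c.length := hc.card_support_toFinset
  have h3 := hc.three_le_length
  have hhandshake := G.sum_degrees_eq_twice_card_edges
  simp only [hcubic.degree_eq, sum_const, card_univ, smul_eq_mul] at hhandshake
  have hcompl := card_compl S
  by_contra! h
  have := sum_degree_add_six_le hgirth hΔ (by omega) (by omega)
  omega
end

section
/- Let G be a cubic graph and let C_0, C_1, ..., C_5 be six pentagons such that each pair shares at most one edge, E(C_0) \cap E(C_i) is nonempty for i = 1,...,5, and consecutive circuits among C_1,...,C_5,C_1 share exactly one edge and its two ends while non-consecutive ones are vertex-disjoint. Then |V(C_0) \cup V(C_1) \cup ... \cup V(C_5)| = 15. -/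
/-!
By inclusion–exclusion the ring `C₁, …, C₅` has `5 · 5 - 5 · 2 = 15` vertices. An edge lying on
three pentagons that pairwise share at most one edge would give one of its ends four
neighbours, so the edges `eᵢ ∈ E(C₀) ∩ E(Cᵢ)` are distinct. Being five, they are all the edges
of `C₀`, so every vertex of `C₀` already lies on the ring.
-/

open SimpleGraph Walk

namespace Finset

variable {α ι : Type*} [DecidableEq α]

theorem subset_biUnion_of_card_le_of_pairwiseDisjoint_inter {s : Finset ι} {A : Finset α}
    {B : ι → Finset α} (hcard : #A ≤ #s) (hmeet : ∀ i ∈ s, (A ∩ B i).Nonempty)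
    (hdisj : (s : Set ι).PairwiseDisjoint fun i => A ∩ B i) : A ⊆ s.biUnion B := by
  have hsub : s.biUnion (fun i => A ∩ B i) ⊆ A := biUnion_subset.2 fun _ _ => inter_subset_left
  have heq : s.biUnion (fun i => A ∩ B i) = A :=
    eq_of_subset_of_card_le hsub (hcard.trans (card_le_card_biUnion hdisj hmeet))
  rw [← heq]
  exact biUnion_mono fun _ _ => inter_subset_right

theorem card_union_add_card_inter_of_cyclic {A B C D E : Finset α} (hAC : Disjoint A C)
    (hAD : Disjoint A D) (hBD : Disjoint B D) (hBE : Disjoint B E) (hCE : Disjoint C E) :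
    #(A ∪ (B ∪ (C ∪ (D ∪ E)))) +
        (#(A ∩ B) + #(B ∩ C) + #(C ∩ D) + #(D ∩ E) + #(E ∩ A)) =
      #A + #B + #C + #D + #E := by
  have hC : C ∩ (D ∪ E) = C ∩ D := by
    rw [inter_union_distrib_left, disjoint_iff_inter_eq_empty.1 hCE, union_empty]
  have hB : B ∩ (C ∪ (D ∪ E)) = B ∩ C := by
    rw [inter_union_distrib_left, inter_union_distrib_left, disjoint_iff_inter_eq_empty.1 hBD,
      disjoint_iff_inter_eq_empty.1 hBE, empty_union, union_empty]
  have hA : A ∩ (B ∪ (C ∪ (D ∪ E))) = A ∩ B ∪ E ∩ A := by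
    rw [inter_union_distrib_left, inter_union_distrib_left, inter_union_distrib_left,
      disjoint_iff_inter_eq_empty.1 hAC, disjoint_iff_inter_eq_empty.1 hAD, empty_union,
      empty_union, inter_comm A E]
  have hAB_EA : #(A ∩ B ∪ E ∩ A) = #(A ∩ B) + #(E ∩ A) :=
    card_union_of_disjoint (hBE.mono inter_subset_right inter_subset_left)
  have h1 := card_union_add_card_inter D E
  have h2 := card_union_add_card_inter C (D ∪ E)
  have h3 := card_union_add_card_inter B (C ∪ (D ∪ E))
  have h4 := card_union_add_card_inter A (B ∪ (C ∪ (D ∪ E)))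
  rw [hC] at h2
  rw [hB] at h3
  rw [hA, hAB_EA] at h4
  omega

end Finset

namespace SimpleGraph.Walk

variable {V : Type*} {G : SimpleGraph V} {u : V} {c : G.Walk u u}

theorem IsCycle.exists_mem_edges_ne (hc : c.IsCycle) {x y : V} (hxy : s(x, y) ∈ c.edges) :
    ∃ t, t ≠ y ∧ s(x, t) ∈ c.edges := by
  have hx : x ∈ c.support := c.fst_mem_support_of_mem_edges hxy
  obtain ⟨t, ht, hty⟩ := Set.exists_ne_of_one_lt_ncard
    (by rw [hc.ncard_neighborSet_toSubgraph_eq_two hx]; norm_num) y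
  exact ⟨t, hty, adj_toSubgraph_iff_mem_edges.1 ht⟩

variable [DecidableEq V]

theorem IsCycle.card_support_toFinset_s9 (hc : c.IsCycle) :
    c.support.toFinset.card = c.length := by
  rw [← cons_tail_support, List.toFinset_cons,
    Finset.insert_eq_of_mem (List.mem_toFinset.2 (end_mem_tail_support hc.not_nil)),
    List.toFinset_card_of_nodup hc.support_nodup, List.length_tail, length_support]
  rfl

theorem IsCycle.card_edges_toFinset (hc : c.IsCycle) :
    c.edges.toFinset.card = c.length := by
  rw [List.toFinset_card_of_nodup hc.edges_nodup, length_edges]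

theorem support_toFinset_subset_biUnion_of_edges_subset {ι : Type*}
    {v : V} {p : G.Walk u v} (hp : ¬p.Nil) {s : Finset ι} {a b : ι → V}
    {q : ∀ i, G.Walk (a i) (b i)}
    (h : p.edges.toFinset ⊆ s.biUnion fun i => (q i).edges.toFinset) :
    p.support.toFinset ⊆ s.biUnion fun i => (q i).support.toFinset := by
  intro w hw
  obtain ⟨e, hep, hwe⟩ :=
    (mem_support_iff_exists_mem_edges_of_not_nil hp).1 (List.mem_toFinset.1 hw)
  obtain ⟨i, hi, heq⟩ := Finset.mem_biUnion.1 (h (List.mem_toFinset.2 hep))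
  exact Finset.mem_biUnion.2
    ⟨i, hi, List.mem_toFinset.2 (mem_support_of_mem_edges (List.mem_toFinset.1 heq) hwe)⟩

theorem ne_of_card_inter_edges_le_one {a a' b b' x y t t' : V} {p : G.Walk a a'}
    {q : G.Walk b b'} (hpq : (p.edges.toFinset ∩ q.edges.toFinset).card ≤ 1)
    (hyp : s(x, y) ∈ p.edges) (hyq : s(x, y) ∈ q.edges)
    (htp : s(x, t) ∈ p.edges) (ht'q : s(x, t') ∈ q.edges) (hty : t ≠ y) : t ≠ t' := by
  rintro rfl
  have := Finset.card_le_one.1 hpq _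
    (Finset.mem_inter.2 ⟨List.mem_toFinset.2 htp, List.mem_toFinset.2 ht'q⟩) _
    (Finset.mem_inter.2 ⟨List.mem_toFinset.2 hyp, List.mem_toFinset.2 hyq⟩)
  exact hty (Sym2.congr_right.1 this)

-- Each of the three cycles leaves `x` along its own edge besides `xy`.
theorem four_le_degree_of_three_isCycle_mem_edges {a b d x y : V}
    [Fintype (G.neighborSet x)] {p : G.Walk a a} {q : G.Walk b b} {r : G.Walk d d}
    (hp : p.IsCycle) (hq : q.IsCycle) (hr : r.IsCycle)
    (hpq : (p.edges.toFinset ∩ q.edges.toFinset).card ≤ 1)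
    (hpr : (p.edges.toFinset ∩ r.edges.toFinset).card ≤ 1)
    (hqr : (q.edges.toFinset ∩ r.edges.toFinset).card ≤ 1)
    (hyp : s(x, y) ∈ p.edges) (hyq : s(x, y) ∈ q.edges) (hyr : s(x, y) ∈ r.edges) :
    4 ≤ G.degree x := by
  obtain ⟨tp, htpy, htp⟩ := hp.exists_mem_edges_ne hyp
  obtain ⟨tq, htqy, htq⟩ := hq.exists_mem_edges_ne hyq
  obtain ⟨tr, htry, htr⟩ := hr.exists_mem_edges_ne hyr
  have hpq' := ne_of_card_inter_edges_le_one hpq hyp hyq htp htq htpy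
  have hpr' := ne_of_card_inter_edges_le_one hpr hyp hyr htp htr htpy
  have hqr' := ne_of_card_inter_edges_le_one hqr hyq hyr htq htr htqy
  have hsub : ({y, tp, tq, tr} : Finset V) ⊆ G.neighborFinset x := by
    simp only [Finset.insert_subset_iff, Finset.singleton_subset_iff, mem_neighborFinset]
    exact ⟨p.adj_of_mem_edges hyp, p.adj_of_mem_edges htp, q.adj_of_mem_edges htq,
      r.adj_of_mem_edges htr⟩
  have hcard : ({y, tp, tq, tr} : Finset V).card = 4 := by
    rw [Finset.card_insert_of_notMem (by simp [htpy.symm, htqy.symm, htry.symm]),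
      Finset.card_insert_of_notMem (by simp [hpq', hpr']), Finset.card_pair hqr']
  rw [← card_neighborFinset_eq_degree, ← hcard]
  exact Finset.card_le_card hsub

theorem disjoint_edges_inter_of_three_isCycle [G.LocallyFinite] (hdeg : ∀ v, G.degree v ≤ 3)
    {a b d : V} {p : G.Walk a a} {q : G.Walk b b} {r : G.Walk d d}
    (hp : p.IsCycle) (hq : q.IsCycle) (hr : r.IsCycle)
    (hpq : (p.edges.toFinset ∩ q.edges.toFinset).card ≤ 1)
    (hpr : (p.edges.toFinset ∩ r.edges.toFinset).card ≤ 1)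
    (hqr : (q.edges.toFinset ∩ r.edges.toFinset).card ≤ 1) :
    Disjoint (p.edges.toFinset ∩ q.edges.toFinset) (p.edges.toFinset ∩ r.edges.toFinset) := by
  refine Finset.disjoint_left.2 fun e hepq hepr => ?_
  induction e using Sym2.ind with | _ x y => ?_
  simp only [Finset.mem_inter, List.mem_toFinset] at hepq hepr
  have := four_le_degree_of_three_isCycle_mem_edges hp hq hr hpq hpr hqr
    hepq.1 hepq.2 hepr.2
  have := hdeg x
  omega

end SimpleGraph.Walk

/-- Let `C₀, C₁, …, C₅` be six pentagons of a cubic graph such that each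
pair shares at most one edge, `E(C₀) ∩ E(Cᵢ) ≠ ∅` for `i = 1, …, 5`, consecutive
pentagons among `C₁, …, C₅, C₁` share exactly one edge together with its two ends, and
non-consecutive ones are vertex-disjoint.  Then their vertex sets together contain
exactly 15 vertices. -/
theorem six_pentagons_fifteen_vertices {V : Type*} [Fintype V] [DecidableEq V]
    (G : SimpleGraph V) [DecidableRel G.Adj]
    (hcubic : G.IsRegularOfDegree 3)
    (u : Fin 6 → V) (c : ∀ i, G.Walk (u i) (u i))
    (hcyc : ∀ i, (c i).IsCycle) (hlen : ∀ i, (c i).length = 5)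
    (hpair : ∀ i j, i ≠ j → ((c i).edges.toFinset ∩ (c j).edges.toFinset).card ≤ 1)
    (hmeet : ∀ i : Fin 6, i ≠ 0 → ((c 0).edges.toFinset ∩ (c i).edges.toFinset).Nonempty)
    (hconsec : ∀ i j : Fin 6,
      ((i, j) = (1, 2) ∨ (i, j) = (2, 3) ∨ (i, j) = (3, 4) ∨ (i, j) = (4, 5) ∨
        (i, j) = (5, 1)) →
      ∃ (x y : V), G.Adj x y ∧
        (c i).edges.toFinset ∩ (c j).edges.toFinset = {s(x, y)} ∧
        (c i).support.toFinset ∩ (c j).support.toFinset = {x, y})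
    (hdisj : ∀ i j : Fin 6,
      ((i, j) = (1, 3) ∨ (i, j) = (1, 4) ∨ (i, j) = (2, 4) ∨ (i, j) = (2, 5) ∨
        (i, j) = (3, 5)) →
      (c i).support.toFinset ∩ (c j).support.toFinset = ∅) :
    ((Finset.univ : Finset (Fin 6)).biUnion fun i => (c i).support.toFinset).card = 15 := by
  set S : Fin 6 → Finset V := fun i => (c i).support.toFinset
  set ring : Finset (Fin 6) := {1, 2, 3, 4, 5}
  have hS : ∀ i, (S i).card = 5 := fun i => (hcyc i).card_support_toFinset_s9.trans (hlen i)
  have hconsec' : ∀ i j, _ → (S i ∩ S j).card = 2 := fun i j hij => by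
    obtain ⟨x, y, hxy, -, hxy'⟩ := hconsec i j hij
    rw [hxy', Finset.card_pair hxy.ne]
  have hdisj' : ∀ i j, _ → Disjoint (S i) (S j) := fun i j hij =>
    Finset.disjoint_iff_inter_eq_empty.2 (hdisj i j hij)
  have hring : (ring.biUnion S).card = 15 := by
    have := Finset.card_union_add_card_inter_of_cyclic (hdisj' 1 3 (by simp))
      (hdisj' 1 4 (by simp)) (hdisj' 2 4 (by simp)) (hdisj' 2 5 (by simp)) (hdisj' 3 5 (by simp))
    rw [hconsec' 1 2 (by simp), hconsec' 2 3 (by simp), hconsec' 3 4 (by simp),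
      hconsec' 4 5 (by simp), hconsec' 5 1 (by simp), hS, hS, hS, hS, hS] at this
    simp only [ring, Finset.biUnion_insert, Finset.singleton_biUnion]
    omega
  have hedges : (c 0).edges.toFinset ⊆ ring.biUnion fun i => (c i).edges.toFinset := by
    refine Finset.subset_biUnion_of_card_le_of_pairwiseDisjoint_inter
      (by rw [(hcyc 0).card_edges_toFinset, hlen 0]; rfl) (fun i hi => hmeet i (by aesop))
      fun i hi j hj hij => disjoint_edges_inter_of_three_isCycle (fun v => (hcubic v).le)
        (hcyc 0) (hcyc i) (hcyc j) (hpair 0 i (by aesop)) (hpair 0 j (by aesop)) (hpair i j hij)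
  have hcover : S 0 ⊆ ring.biUnion S :=
    support_toFinset_subset_biUnion_of_edges_subset (hcyc 0).not_nil hedges
  have huniv : (Finset.univ : Finset (Fin 6)) = insert 0 ring := by decide
  rw [huniv, Finset.biUnion_insert, Finset.union_eq_right.2 hcover, hring]
end

section
/- A cubic graph of girth at least 5 is theta-connected if and only if it has no shore, where a shore is a set X of vertices such that |\delta(X)| \le 5 and both G|X and G \ X contain at least two distinct cycles. -/
/-- The edge boundary `δ(X)`: edges of `G` with exactly one end in `X`. -/
def cut {V : Type*} (G : SimpleGraph V) (X : Set V) : Set (Sym2 V) :=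
  {e | e ∈ G.edgeSet ∧ ∃ x ∈ X, ∃ y, y ∉ X ∧ e = s(x, y)}

/-- The set of cycles of `G`, each recorded by its edge set. -/
def cycleEdgeSets {V : Type*} [DecidableEq V] (G : SimpleGraph V) :
    Set (Finset (Sym2 V)) :=
  {s | ∃ (u : V) (w : G.Walk u u), w.IsCycle ∧ w.edges.toFinset = s}

/-!
Counting edge ends, a vertex set `S` of a cubic graph satisfies `3|S| = 2 e(G|S) + |δ(S)|`.
If `|S| ≥ 7` and `|δ(S)| ≤ 5` this forces `e(G|S) > |S|`, and a graph with more edges than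
vertices has two distinct cycles: deleting an edge of one cycle leaves a graph that is still
not a forest. Conversely, a graph of girth at least 5 on `n ≤ 6` vertices has at most `n` edges:
for each vertex `v`, the neighbourhoods of the neighbours of `v` pairwise meet only in `v` and
avoid `N(v)`, so `∑_{u ~ v} d(u) ≤ n - 1`; summing over `v` gives `∑ d(v)² ≤ n(n - 1)`, and
Cauchy–Schwarz gives `4e² ≤ n²(n - 1)`. With the count above, a side `S` of a cut of size at
most 5 with `|S| ≤ 6` then has at most `5 ≤ girth` edges, so every cycle of `G|S` uses all of
them and `G|S` has at most one cycle.
-/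

theorem cut_compl {V : Type*} (G : SimpleGraph V) (X : Set V) : cut G Xᶜ = cut G X := by
  ext e
  simp only [cut, Set.mem_ofPred_eq, Set.mem_compl_iff, not_not]
  constructor <;>
  · rintro ⟨he, x, hx, y, hy, rfl⟩
    exact ⟨he, y, hy, x, hx, Sym2.eq_swap⟩

open Finset

namespace SimpleGraph

variable {V : Type*} {G : SimpleGraph V}

theorem IsAcyclic.ncard_edgeSet_lt [Finite V] [Nonempty V] (h : G.IsAcyclic) :
    G.edgeSet.ncard < Nat.card V := by
  obtain ⟨T, hGT, hT⟩ := (⊤ : SimpleGraph V).exists_maximal_isAcyclic_of_le_isAcyclic le_top h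
  have hTree : T.IsTree := (connected_top.maximal_le_isAcyclic_iff_isTree le_top).mp hT
  calc G.edgeSet.ncard ≤ T.edgeSet.ncard := Set.ncard_le_ncard (edgeSet_mono hGT)
    _ < Nat.card V := by
      rw [← (isTree_iff_connected_and_card.mp hTree).2, Nat.card_coe_set_eq]; omega

theorem exists_isCycle_of_card_le_ncard_edgeSet [Finite V] (hG : G.edgeSet.Nonempty)
    (h : Nat.card V ≤ G.edgeSet.ncard) : ∃ (u : V) (c : G.Walk u u), c.IsCycle := by
  obtain ⟨⟨a, _⟩, -⟩ := hG
  have : Nonempty V := ⟨a⟩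
  by_contra! hac
  exact (IsAcyclic.ncard_edgeSet_lt hac).not_ge h

theorem egirth_le_egirth_induce (S : Set V) : G.egirth ≤ (G.induce S).egirth :=
  (Embedding.induce S).toCopy.isContained.egirth_le

theorem not_adj_of_four_le_egirth (hg : 4 ≤ G.egirth) {a b c : V} (hab : G.Adj a b)
    (hbc : G.Adj b c) : ¬G.Adj c a := by
  intro hca
  have hcyc : (Walk.cons hab (Walk.cons hbc (Walk.cons hca Walk.nil))).IsCycle := by
    simp [Walk.cons_isCycle_iff, hab.ne, hbc.ne, hca.ne, hab.ne.symm, hca.ne.symm]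
  have := le_egirth.mp hg _ _ hcyc
  norm_num at this

theorem eq_of_adj_of_adj_of_five_le_egirth (hg : 5 ≤ G.egirth) {v a b w : V} (hva : G.Adj v a)
    (hvb : G.Adj v b) (haw : G.Adj a w) (hbw : G.Adj b w) (hvw : v ≠ w) : a = b := by
  by_contra hab
  have hcyc : (Walk.cons hva (Walk.cons haw
      (Walk.cons hbw.symm (Walk.cons hvb.symm Walk.nil)))).IsCycle := by
    simp [Walk.cons_isCycle_iff, hva.ne, haw.ne, hvb.ne, hva.ne.symm, hbw.ne.symm, hvb.ne.symm,
      hab, hvw, hvw.symm]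
  have := le_egirth.mp hg _ _ hcyc
  norm_num at this

section Moore

variable [Fintype V] [DecidableEq V] [DecidableRel G.Adj]

theorem sum_degree_neighborFinset_lt_card (hg : 5 ≤ G.egirth) (v : V) :
    ∑ u ∈ G.neighborFinset v, G.degree u < Fintype.card V := by
  -- `(u, w)` with `v ~ u ~ w` goes to `u` if `w = v` and to `w` otherwise; it never hits `v`,
  -- and girth at least 5 makes it injective.
  let f : (Σ _ : V, V) → V := fun p => if p.2 = v then p.1 else p.2
  have hmaps : Set.MapsTo f ((G.neighborFinset v).sigma fun u => G.neighborFinset u)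
      (univ.erase v) := by
    rintro ⟨u, w⟩ h
    simp only [coe_sigma, Set.mem_sigma_iff, mem_coe, mem_neighborFinset] at h
    simp only [f, coe_erase, coe_univ, Set.mem_sdiff, Set.mem_univ, Set.mem_singleton_iff,
      true_and]
    split_ifs with hw
    · exact h.1.ne'
    · exact hw
  have hinj : Set.InjOn f ((G.neighborFinset v).sigma fun u => G.neighborFinset u) := by
    have h4 : 4 ≤ G.egirth := le_trans (by norm_num) hg
    rintro ⟨u₁, w₁⟩ h₁ ⟨u₂, w₂⟩ h₂ heq
    simp only [coe_sigma, Set.mem_sigma_iff, mem_coe, mem_neighborFinset] at h₁ h₂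
    simp only [f] at heq
    split_ifs at heq with hw₁ hw₂ hw₂
    · subst heq hw₁ hw₂; rfl
    · exact absurd (heq ▸ h₁.1).symm (not_adj_of_four_le_egirth h4 h₂.1 h₂.2)
    · exact absurd (heq ▸ h₂.1).symm (not_adj_of_four_le_egirth h4 h₁.1 h₁.2)
    · subst heq
      obtain rfl := eq_of_adj_of_adj_of_five_le_egirth hg h₁.1 h₂.1 h₁.2 h₂.2 (Ne.symm hw₁)
      rfl
  calc ∑ u ∈ G.neighborFinset v, G.degree u
      = #((G.neighborFinset v).sigma fun u => G.neighborFinset u) := by simp [card_sigma]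
    _ ≤ #(univ.erase v) := card_le_card_of_injOn f hmaps hinj
    _ < Fintype.card V := card_erase_lt_of_mem (mem_univ v)

theorem sum_degree_sq_add_card_le (hg : 5 ≤ G.egirth) :
    ∑ v, G.degree v ^ 2 + Fintype.card V ≤ Fintype.card V * Fintype.card V := by
  have hswap : ∑ v, ∑ u ∈ G.neighborFinset v, G.degree u = ∑ u, G.degree u ^ 2 := by
    rw [sum_comm' (t' := univ) (s' := fun u => G.neighborFinset u)]
    · simp [sq]
    · simp [adj_comm]
  have := sum_le_sum fun v (_ : v ∈ univ) =>
    Nat.succ_le_of_lt (sum_degree_neighborFinset_lt_card hg v)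
  simpa [sum_add_distrib, hswap] using this

end Moore

theorem ncard_edgeSet_le_card_of_five_le_egirth [Finite V] (hg : 5 ≤ G.egirth)
    (hn : Nat.card V ≤ 6) : G.edgeSet.ncard ≤ Nat.card V := by
  classical
  have := Fintype.ofFinite V
  rw [← coe_edgeFinset, Set.ncard_coe_finset, Nat.card_eq_fintype_card]
  rw [Nat.card_eq_fintype_card] at hn
  have hcs : (∑ v, G.degree v) ^ 2 ≤ Fintype.card V * ∑ v, G.degree v ^ 2 :=
    sq_sum_le_card_mul_sum_sq
  rw [sum_degrees_eq_twice_card_edges] at hcs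
  have hsq := sum_degree_sq_add_card_le hg
  by_contra! h
  interval_cases Fintype.card V <;> nlinarith

variable [DecidableEq V]

theorem two_le_ncard_cycleEdgeSets [Finite V] (h : Nat.card V < G.edgeSet.ncard) :
    2 ≤ (cycleEdgeSets G).ncard := by
  obtain ⟨u, c, hc⟩ := exists_isCycle_of_card_le_ncard_edgeSet
    (Set.nonempty_of_ncard_ne_zero (by omega)) h.le
  obtain ⟨e, he⟩ := List.exists_mem_of_ne_nil _ (Walk.edges_eq_nil.not.mpr hc.not_nil)
  have hdel : (G.deleteEdges {e}).edgeSet.ncard + 1 = G.edgeSet.ncard := by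
    rw [edgeSet_deleteEdges]
    exact Set.ncard_sdiff_singleton_add_one (c.edges_subset_edgeSet he)
  have : 0 < Nat.card V := Nat.card_pos_iff.mpr ⟨⟨u⟩, inferInstance⟩
  obtain ⟨u', c', hc'⟩ := exists_isCycle_of_card_le_ncard_edgeSet (G := G.deleteEdges {e})
    (Set.nonempty_of_ncard_ne_zero (by omega)) (by omega)
  have he' : e ∉ c'.edges := fun he' => by
    simpa using c'.edges_subset_edgeSet he'
  refine (Set.one_lt_ncard_iff).mpr ⟨_, _, ⟨u, c, hc, rfl⟩,
    ⟨u', c'.mapLe (G.deleteEdges_le _), hc'.mapLe _, rfl⟩, fun heq => he' ?_⟩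
  rw [← Walk.edges_mapLe_eq_edges (G.deleteEdges_le _), ← List.mem_toFinset, ← heq]
  exact List.mem_toFinset.mpr he

theorem ncard_cycleEdgeSets_le_one [Finite V]
    (h : ∀ (u : V) (c : G.Walk u u), c.IsCycle → G.edgeSet.ncard ≤ c.length) :
    (cycleEdgeSets G).ncard ≤ 1 := by
  have hall : ∀ s ∈ cycleEdgeSets G, (s : Set (Sym2 V)) = G.edgeSet := by
    rintro _ ⟨u, c, hc, rfl⟩
    refine Set.eq_of_subset_of_ncard_le (fun e he => c.edges_subset_edgeSet (by simpa using he))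
      ?_ (Set.toFinite _)
    rw [Set.ncard_coe_finset, List.toFinset_card_of_nodup hc.edges_nodup, Walk.length_edges]
    exact h u c hc
  exact (Set.ncard_le_one).mpr fun a ha b hb => coe_injective ((hall a ha).trans (hall b hb).symm)

theorem sum_degree_eq_two_mul_ncard_edgeSet_induce_add_ncard_cut [Fintype V]
    [DecidableRel G.Adj] (S : Set V) [DecidablePred (· ∈ S)] :
    ∑ v ∈ S.toFinset, G.degree v = 2 * (G.induce S).edgeSet.ncard + (cut G S).ncard := by
  have hin : ∑ v ∈ S.toFinset, #(G.neighborFinset v ∩ S.toFinset)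
      = 2 * (G.induce S).edgeSet.ncard := by
    rw [← coe_edgeFinset, Set.ncard_coe_finset, ← sum_degrees_eq_twice_card_edges,
      sum_subtype S.toFinset (p := (· ∈ S)) (by simp)]
    refine sum_congr rfl fun v _ => ?_
    rw [← map_neighborFinset_induce, card_map, card_neighborFinset_eq_degree]
  have hcut : cut G S = ((S.toFinset.sigma fun v => G.neighborFinset v \ S.toFinset).image
      fun p => s(p.1, p.2) : Set (Sym2 V)) := by
    ext e
    simp only [cut, Set.mem_ofPred_eq, coe_image, coe_sigma, Set.coe_toFinset, coe_sdiff,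
      coe_neighborFinset, Set.mem_image, Set.mem_sigma_iff, Set.mem_sdiff, mem_neighborSet,
      Sigma.exists]
    constructor
    · rintro ⟨he, x, hx, y, hy, rfl⟩
      exact ⟨x, y, ⟨hx, he, hy⟩, rfl⟩
    · rintro ⟨x, y, ⟨hx, hxy, hy⟩, rfl⟩
      exact ⟨hxy, x, hx, y, hy, rfl⟩
  have hout : ∑ v ∈ S.toFinset, #(G.neighborFinset v \ S.toFinset) = (cut G S).ncard := by
    rw [← card_sigma, hcut, Set.ncard_coe_finset, card_image_of_injOn]
    rintro ⟨x₁, y₁⟩ h₁ ⟨x₂, y₂⟩ h₂ heq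
    simp only [coe_sigma, Set.coe_toFinset, coe_sdiff, coe_neighborFinset, Set.mem_sigma_iff,
      Set.mem_sdiff, mem_neighborSet, Sym2.eq, Sym2.rel_iff', Prod.mk.injEq,
      Prod.swap_prod_mk] at h₁ h₂ heq
    rcases heq with ⟨rfl, rfl⟩ | ⟨rfl, rfl⟩
    · rfl
    · exact absurd h₁.1 h₂.2.2
  rw [← hin, ← hout, ← sum_add_distrib]
  exact sum_congr rfl fun v _ => (card_inter_add_card_sdiff _ _).symm

theorem IsRegularOfDegree.mul_ncard_eq [Fintype V] [DecidableRel G.Adj] {d : ℕ}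
    (hG : G.IsRegularOfDegree d) (S : Set V) :
    d * S.ncard = 2 * (G.induce S).edgeSet.ncard + (cut G S).ncard := by
  classical
  rw [← sum_degree_eq_two_mul_ncard_edgeSet_induce_add_ncard_cut, sum_congr rfl fun v _ => hG v,
    sum_const, smul_eq_mul, Set.ncard_eq_toFinset_card', mul_comm]

theorem IsRegularOfDegree.two_le_ncard_cycleEdgeSets_induce [Fintype V] [DecidableRel G.Adj]
    (hcubic : G.IsRegularOfDegree 3) {S : Set V} (hS : 7 ≤ S.ncard)
    (hcut : (cut G S).ncard ≤ 5) : 2 ≤ (cycleEdgeSets (G.induce S)).ncard := by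
  have := hcubic.mul_ncard_eq S
  exact two_le_ncard_cycleEdgeSets (by rw [Nat.card_coe_set_eq]; omega)

theorem IsRegularOfDegree.seven_le_ncard_of_ncard_cut_le_five [Fintype V] [DecidableRel G.Adj]
    (hcubic : G.IsRegularOfDegree 3) (hgirth : 5 ≤ G.egirth) {S : Set V}
    (hcut : (cut G S).ncard ≤ 5) (hcyc : 2 ≤ (cycleEdgeSets (G.induce S)).ncard) :
    7 ≤ S.ncard := by
  have hg : 5 ≤ (G.induce S).egirth := hgirth.trans (egirth_le_egirth_induce S)
  have hcount := hcubic.mul_ncard_eq S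
  by_contra! hS
  have hedges := ncard_edgeSet_le_card_of_five_le_egirth hg (by rw [Nat.card_coe_set_eq]; omega)
  rw [Nat.card_coe_set_eq] at hedges
  have hone : (cycleEdgeSets (G.induce S)).ncard ≤ 1 := by
    refine ncard_cycleEdgeSets_le_one fun u c hc => ?_
    have : (5 : ℕ∞) ≤ c.length := le_egirth.mp hg u c hc
    have : 5 ≤ c.length := by exact_mod_cast this
    omega
  omega

end SimpleGraph

/-- A cubic graph of girth at least 5 is theta-connected if and only if it
has no shore, where a shore is a set `X` with `|δ(X)| ≤ 5` such that both `G|X` and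
`G \ X` contain at least two distinct cycles. -/
theorem theta_connected_iff_no_shore {V : Type*} [Fintype V] [DecidableEq V]
    (G : SimpleGraph V) [DecidableRel G.Adj]
    (hcubic : G.IsRegularOfDegree 3) (hgirth : 5 ≤ G.egirth) :
    (∀ X : Set V, 7 ≤ X.ncard → 7 ≤ Xᶜ.ncard → 6 ≤ (cut G X).ncard) ↔
      ¬ ∃ X : Set V, (cut G X).ncard ≤ 5 ∧
        2 ≤ (cycleEdgeSets (G.induce X)).ncard ∧
        2 ≤ (cycleEdgeSets (G.induce Xᶜ)).ncard := by
  constructor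
  · rintro htheta ⟨X, hcut, hX, hXc⟩
    have hcut' : (cut G Xᶜ).ncard ≤ 5 := cut_compl G X ▸ hcut
    have := htheta X (hcubic.seven_le_ncard_of_ncard_cut_le_five hgirth hcut hX)
      (hcubic.seven_le_ncard_of_ncard_cut_le_five hgirth hcut' hXc)
    omega
  · intro hno X hX hXc
    by_contra! hcut
    have hcut' : (cut G Xᶜ).ncard ≤ 5 := by rw [cut_compl]; omega
    exact hno ⟨X, by omega, hcubic.two_le_ncard_cycleEdgeSets_induce hX (by omega),
      hcubic.two_le_ncard_cycleEdgeSets_induce hXc hcut'⟩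
end

section
/- In a cubic graph of girth at least 5, no two distinct pentagons share more than two edges, and consequently each vertex incident to a given edge e belonging to no pentagon lies in at most two pentagons. -/
/-!
If two distinct closed trails share many edges, the symmetric difference of their edge sets is a
small nonempty edge set in which every vertex has even degree. Such an edge set is not a forest
(a forest with an edge has a leaf), so it contains a cycle of length at most its size. For two
pentagons sharing three edges this gives a cycle of length at most `5 + 5 - 2 * 3 = 4`,
contradicting girth at least five.

In a cubic graph, a pentagon through `v` avoiding the edge `vw` must use both other edges `va` and
`vb` at `v`, and one of the two further edges `ac` at `a`. Two pentagons with the same `c` share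
the three edges `va`, `vb`, `ac`, hence coincide, so there are at most two of them.
-/

/-- The set of pentagons of `G`, each recorded by its (5-element) edge set. -/
def pentagonEdgeSets {V : Type*} [DecidableEq V] (G : SimpleGraph V) :
    Set (Finset (Sym2 V)) :=
  {s | ∃ (u : V) (w : G.Walk u u), w.IsCycle ∧ w.length = 5 ∧ w.edges.toFinset = s}

open Finset
open scoped symmDiff

namespace Finset

variable {α : Type*} [DecidableEq α]

lemma card_symmDiff_add_two_mul_card_inter (s t : Finset α) :
    #(s ∆ t) + 2 * #(s ∩ t) = #s + #t := by
  have := card_le_card (inter_subset_union (s := s) (t := t))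
  rw [symmDiff_eq_sup_sdiff_inf, sup_eq_union, inf_eq_inter,
    card_sdiff_of_subset inter_subset_union, ← card_union_add_card_inter]
  omega

lemma filter_symmDiff (p : α → Prop) [DecidablePred p] (s t : Finset α) :
    {a ∈ s ∆ t | p a} = {a ∈ s | p a} ∆ {a ∈ t | p a} := by
  ext a
  simp only [mem_filter, mem_symmDiff]
  tauto

lemma even_card_symmDiff {s t : Finset α} (hs : Even #s) (ht : Even #t) : Even #(s ∆ t) := by
  have := card_symmDiff_add_two_mul_card_inter s t
  obtain ⟨k, hk⟩ := hs
  obtain ⟨l, hl⟩ := ht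
  exact ⟨k + l - #(s ∩ t), by omega⟩

end Finset

namespace SimpleGraph

variable {V : Type*} {G : SimpleGraph V}

lemma IsAcyclic.exists_degree_eq_one [Fintype V] [DecidableRel G.Adj] (hG : G.IsAcyclic)
    {x y : V} (hxy : G.Adj x y) : ∃ u, G.degree u = 1 := by
  have : Nonempty V := ⟨x⟩
  obtain ⟨u, v, p, hp, hmax⟩ := Walk.exists_isPath_forall_isPath_length_le_length G
  have hnil : ¬p.Nil := by
    intro h
    have := hmax _ _ _ (Walk.IsPath.mk' (by simp [hxy.ne]) : (Walk.cons hxy .nil).IsPath)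
    simp [h.length_eq_zero] at this
  -- an endpoint of a longest path is a leaf
  refine ⟨u, degree_eq_one_iff_existsUnique_adj.mpr ⟨p.snd, p.adj_snd hnil, fun w hw => ?_⟩⟩
  refine hG.eq_snd_of_adj_start hp hw (by_contra fun hw' => ?_)
  have := hmax _ _ _ (hp.cons (h := hw.symm) hw')
  simp at this

lemma not_isAcyclic_of_forall_even_degree [Fintype V] [DecidableRel G.Adj]
    (heven : ∀ v, Even (G.degree v)) {x y : V} (hxy : G.Adj x y) : ¬G.IsAcyclic := fun hG =>
  have ⟨u, hu⟩ := hG.exists_degree_eq_one hxy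
  Nat.not_even_one (hu ▸ heven u)

variable [DecidableEq V]

lemma degree_fromEdgeSet [Fintype V] {D : Finset (Sym2 V)} (hD : ∀ e ∈ D, ¬e.IsDiag) (x : V)
    [Fintype ((fromEdgeSet (D : Set (Sym2 V))).neighborSet x)] :
    (fromEdgeSet (D : Set (Sym2 V))).degree x = #{e ∈ D | x ∈ e} := by
  classical
  rw [← card_incidenceFinset_eq_degree, incidenceFinset_eq_filter]
  congr 1
  ext e
  simp only [mem_filter, mem_edgeFinset, edgeSet_fromEdgeSet, Set.mem_sdiff, mem_coe,
    Sym2.mem_diagSet]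
  exact and_congr_left fun _ => and_iff_left_of_imp (hD e)

lemma egirth_le_card_of_forall_even_card_filter_mem [Fintype V] {D : Finset (Sym2 V)}
    (hD : (D : Set (Sym2 V)) ⊆ G.edgeSet) (hne : D.Nonempty)
    (heven : ∀ x, Even #{e ∈ D | x ∈ e}) : G.egirth ≤ #D := by
  classical
  set H := fromEdgeSet (D : Set (Sym2 V))
  have hdiag : ∀ e ∈ D, ¬e.IsDiag := fun e he => G.not_isDiag_of_mem_edgeSet (hD he)
  have hHG : H ≤ G := (fromEdgeSet_le (G := G)).mpr fun e he => hD he.1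
  obtain ⟨⟨x, y⟩, he⟩ := hne
  have hxy : H.Adj x y := by
    simpa [H] using ⟨he, (hdiag _ he : ¬x = y)⟩
  obtain ⟨u, c, hc⟩ : ∃ u, ∃ c : H.Walk u u, c.IsCycle := by
    by_contra! h
    exact not_isAcyclic_of_forall_even_degree (fun v => degree_fromEdgeSet hdiag v ▸ heven v)
      hxy fun u c => h u c
  calc G.egirth ≤ (c.mapLe hHG).length := egirth_le_length (hc.mapLe hHG)
    _ = #c.edges.toFinset := by
      rw [Walk.length_mapLe, ← Walk.length_edges, List.toFinset_card_of_nodup hc.edges_nodup]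
    _ ≤ #D := by
      refine mod_cast card_le_card fun e he => ?_
      have := c.edges_subset_edgeSet (List.mem_toFinset.mp he)
      exact mem_coe.mp (edgeSet_fromEdgeSet _ ▸ this).1

namespace Walk

lemma IsTrail.even_card_filter_mem_edges {u : V} {c : G.Walk u u} (hc : c.IsTrail) (x : V) :
    Even #{e ∈ c.edges.toFinset | x ∈ e} := by
  have : {e ∈ c.edges.toFinset | x ∈ e} = (c.edges.filter (x ∈ ·)).toFinset := by
    ext; simp
  rw [this, List.toFinset_card_of_nodup (hc.edges_nodup.filter _),
    ← List.countP_eq_length_filter]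
  exact (hc.even_countP_edges_iff x).mpr (absurd rfl)

lemma IsTrail.exists_ne_of_mem_edges {u x y : V} {c : G.Walk u u} (hc : c.IsTrail)
    (hxy : s(x, y) ∈ c.edges) : ∃ z ≠ y, s(x, z) ∈ c.edges := by
  have hmem : s(x, y) ∈ ({e ∈ c.edges.toFinset | x ∈ e} : Finset _) := by simpa using hxy
  have hcard : 1 < #{e ∈ c.edges.toFinset | x ∈ e} := by
    obtain ⟨k, hk⟩ := hc.even_card_filter_mem_edges x
    have := card_pos.mpr ⟨_, hmem⟩
    omega
  obtain ⟨e, he, hne⟩ := exists_mem_ne hcard s(x, y)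
  rw [mem_filter, List.mem_toFinset] at he
  obtain ⟨z, rfl⟩ := Sym2.mem_iff_exists.mp he.2
  exact ⟨z, fun h => hne (h ▸ rfl), he.1⟩

lemma IsTrail.egirth_le_card_symmDiff_edges [Fintype V] {u v : V} {c₁ : G.Walk u u}
    {c₂ : G.Walk v v} (h₁ : c₁.IsTrail) (h₂ : c₂.IsTrail)
    (hne : c₁.edges.toFinset ≠ c₂.edges.toFinset) :
    G.egirth ≤ #(c₁.edges.toFinset ∆ c₂.edges.toFinset) := by
  refine egirth_le_card_of_forall_even_card_filter_mem (fun e he => ?_)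
    (symmDiff_nonempty.mpr hne) fun x => by
      rw [filter_symmDiff]
      exact even_card_symmDiff (h₁.even_card_filter_mem_edges x)
        (h₂.even_card_filter_mem_edges x)
  rcases mem_symmDiff.mp he with ⟨he, -⟩ | ⟨he, -⟩
  exacts [c₁.edges_subset_edgeSet (List.mem_toFinset.mp he),
    c₂.edges_subset_edgeSet (List.mem_toFinset.mp he)]

end Walk

end SimpleGraph

section Pentagons

open SimpleGraph

variable {V : Type*} [DecidableEq V] {G : SimpleGraph V} {P Q : Finset (Sym2 V)}

lemma card_eq_five_of_mem_pentagonEdgeSets (hP : P ∈ pentagonEdgeSets G) : #P = 5 := by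
  obtain ⟨u, c, hc, hlen, rfl⟩ := hP
  rw [List.toFinset_card_of_nodup hc.edges_nodup, Walk.length_edges, hlen]

lemma adj_of_mem_pentagonEdgeSets (hP : P ∈ pentagonEdgeSets G) {x y : V} (hxy : s(x, y) ∈ P) :
    G.Adj x y := by
  obtain ⟨u, c, -, -, rfl⟩ := hP
  exact c.adj_of_mem_edges (List.mem_toFinset.mp hxy)

lemma exists_ne_of_mem_pentagonEdgeSets (hP : P ∈ pentagonEdgeSets G) {x y : V}
    (hxy : s(x, y) ∈ P) : ∃ z ≠ y, s(x, z) ∈ P := by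
  obtain ⟨u, c, hc, -, rfl⟩ := hP
  simpa using hc.isTrail.exists_ne_of_mem_edges (List.mem_toFinset.mp hxy)

lemma eq_of_three_le_card_inter_of_mem_pentagonEdgeSets [Fintype V] (hg : 5 ≤ G.egirth)
    (hP : P ∈ pentagonEdgeSets G) (hQ : Q ∈ pentagonEdgeSets G) (hPQ : 3 ≤ #(P ∩ Q)) :
    P = Q := by
  by_contra hne
  have hsum := card_symmDiff_add_two_mul_card_inter P Q
  rw [card_eq_five_of_mem_pentagonEdgeSets hP, card_eq_five_of_mem_pentagonEdgeSets hQ] at hsum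
  obtain ⟨u, c₁, hc₁, -, rfl⟩ := hP
  obtain ⟨v, c₂, hc₂, -, rfl⟩ := hQ
  have := hg.trans (hc₁.isTrail.egirth_le_card_symmDiff_edges hc₂.isTrail hne)
  norm_cast at this
  omega

lemma eq_of_mem_pentagonEdgeSets_of_subset_inter [Fintype V] (hg : 5 ≤ G.egirth)
    (hP : P ∈ pentagonEdgeSets G) (hQ : Q ∈ pentagonEdgeSets G) {v a b c : V} (hva : v ≠ a)
    (hab : a ≠ b) (hcv : c ≠ v) (h : {s(v, a), s(v, b), s(a, c)} ⊆ P ∩ Q) : P = Q := by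
  refine eq_of_three_le_card_inter_of_mem_pentagonEdgeSets hg hP hQ
    (le_of_eq_of_le ?_ (card_le_card h))
  rw [eq_comm, card_eq_three]
  refine ⟨_, _, _, ?_, ?_, ?_, rfl⟩ <;> simp only [ne_eq, Sym2.eq_iff] <;> tauto

lemma mk_mem_and_mk_mem_of_neighborFinset_erase_eq [Fintype V] [DecidableRel G.Adj]
    {v w a b : V} (hN : (G.neighborFinset v).erase w = {a, b}) (hP : P ∈ pentagonEdgeSets G)
    (hvw : s(v, w) ∉ P) (hv : ∃ e ∈ P, v ∈ e) : s(v, a) ∈ P ∧ s(v, b) ∈ P := by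
  have hother : ∀ {z}, s(v, z) ∈ P → z = a ∨ z = b := fun {z} hz => by
    have : z ∈ (G.neighborFinset v).erase w :=
      mem_erase.mpr ⟨fun h => hvw (h ▸ hz),
        (mem_neighborFinset _ _ _).mpr (adj_of_mem_pentagonEdgeSets hP hz)⟩
    simpa [hN] using this
  obtain ⟨e, heP, hve⟩ := hv
  obtain ⟨z, rfl⟩ := Sym2.mem_iff_exists.mp hve
  obtain ⟨z', hz'z, hz'⟩ := exists_ne_of_mem_pentagonEdgeSets hP heP
  rcases hother heP with rfl | rfl <;> rcases hother hz' with rfl | rfl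
  all_goals first | exact absurd rfl hz'z | exact ⟨‹_›, ‹_›⟩

lemma ncard_pentagonEdgeSets_through_le_two [Fintype V] [DecidableRel G.Adj]
    (hcubic : G.IsRegularOfDegree 3) (hg : 5 ≤ G.egirth) {v w : V} (hvw : G.Adj v w)
    (hno : ∀ P ∈ pentagonEdgeSets G, s(v, w) ∉ P) :
    {P ∈ pentagonEdgeSets G | ∃ e ∈ P, v ∈ e}.ncard ≤ 2 := by
  have hcard_erase : ∀ {x y : V}, G.Adj x y → #((G.neighborFinset x).erase y) = 2 := fun h => by
    rw [card_erase_of_mem ((mem_neighborFinset _ _ _).mpr h), card_neighborFinset_eq_degree,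
      hcubic]
  obtain ⟨a, b, hab, hN⟩ := card_eq_two.mp (hcard_erase hvw)
  have hboth : ∀ P ∈ {P ∈ pentagonEdgeSets G | ∃ e ∈ P, v ∈ e},
      s(v, a) ∈ P ∧ s(v, b) ∈ P := fun P hP =>
    mk_mem_and_mk_mem_of_neighborFinset_erase_eq hN hP.1 (hno P hP.1) hP.2
  have hva : G.Adj v a :=
    (mem_neighborFinset _ _ _).mp (mem_of_mem_erase (hN ▸ mem_insert_self a {b}))
  have hnext : ∀ P ∈ {P ∈ pentagonEdgeSets G | ∃ e ∈ P, v ∈ e},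
      ∃ c ∈ (G.neighborFinset a).erase v, s(a, c) ∈ P := by
    intro P hPS
    obtain ⟨c, hcv, hc⟩ :=
      exists_ne_of_mem_pentagonEdgeSets hPS.1 (Sym2.eq_swap ▸ (hboth P hPS).1)
    exact ⟨c, mem_erase.mpr ⟨hcv,
      (mem_neighborFinset _ _ _).mpr (adj_of_mem_pentagonEdgeSets hPS.1 hc)⟩, hc⟩
  have : Nonempty V := ⟨v⟩
  choose! f hf using hnext
  calc _ ≤ (((G.neighborFinset a).erase v : Finset V) : Set V).ncard :=
        Set.ncard_le_ncard_of_injOn f (fun P hP => (hf P hP).1) fun P hP Q hQ hPQ => ?_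
    _ = 2 := by rw [Set.ncard_coe_finset, hcard_erase hva.symm]
  refine eq_of_mem_pentagonEdgeSets_of_subset_inter hg hP.1 hQ.1 hva.ne hab
    (mem_erase.mp (hf P hP).1).1 ?_
  simp only [insert_subset_iff, singleton_subset_iff, mem_inter]
  exact ⟨⟨(hboth P hP).1, (hboth Q hQ).1⟩, ⟨(hboth P hP).2, (hboth Q hQ).2⟩,
    ⟨(hf P hP).2, hPQ ▸ (hf Q hQ).2⟩⟩

end Pentagons

/-- In a cubic graph of girth at least 5, no two distinct pentagons share
more than two edges, and consequently for any edge `e` belonging to no pentagon, each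
vertex incident to `e` lies in at most two pentagons. -/
theorem pentagons_share_at_most_two_edges {V : Type*} [Fintype V] [DecidableEq V]
    (G : SimpleGraph V) [DecidableRel G.Adj]
    (hcubic : G.IsRegularOfDegree 3) (hgirth : 5 ≤ G.egirth) :
    (∀ {u v : V} (c₁ : G.Walk u u) (c₂ : G.Walk v v), c₁.IsCycle → c₂.IsCycle →
      c₁.length = 5 → c₂.length = 5 → c₁.edges.toFinset ≠ c₂.edges.toFinset →
      (c₁.edges.toFinset ∩ c₂.edges.toFinset).card ≤ 2) ∧
    (∀ e ∈ G.edgeSet, (∀ s ∈ pentagonEdgeSets G, e ∉ s) →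
      ∀ v ∈ e, ({s ∈ pentagonEdgeSets G | ∃ e' ∈ s, v ∈ e'}).ncard ≤ 2) := by
  refine ⟨fun c₁ c₂ h₁ h₂ l₁ l₂ hne => ?_, fun e he hno v hv => ?_⟩
  · by_contra! h
    exact hne (eq_of_three_le_card_inter_of_mem_pentagonEdgeSets hgirth
      ⟨_, c₁, h₁, l₁, rfl⟩ ⟨_, c₂, h₂, l₂, rfl⟩ h)
  · obtain ⟨w, rfl⟩ := Sym2.mem_iff_exists.mp hv
    exact ncard_pentagonEdgeSets_through_le_two hcubic hgirth he hno
end
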